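/- arXiv:2401.00760 — 2 statements merged into one kernel-verified Lean document; each statement's English description precedes it below -/
import Mathlib

section
/- Assume σ1 = τ1, σ2 ≠ τ2, and Res_x(h1, h1′) = 0. Then the projective curve F = 0 has a unique singular point of the form (x:0:1), namely (ξ:0:1) with ξ = (σ3−τ3)/(2(σ2−τ2)), and Sing = {(0:1:0), (1:0:0), (ξ:0:1)} has exactly 3 elements. -/
/-!
The homogenization is $F = y^4z^2 - 2(Φ_1+Φ_2)y^2 + H^2$, where $Φ_1, Φ_2$ are the quartic forms
of $φ_1, φ_2$ and $H$ is the cubic form of $h_1$, so that $zH = Φ_2 - Φ_1$. Off the line $y = 0$,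
$F_y = 0$ gives $Φ_1 + Φ_2 = y^2z^2$. If moreover $z ≠ 0$, then $F = 0$ gives $Φ_1Φ_2 = 0$ and
$F_x = 0$ makes that zero a double root, which the distinctness of the roots forbids; if $z = 0$,
only $(0:1:0)$ is left. On the line $y = 0$ the singular points are the zeros of $H$, and when
$σ_1 = τ_1$ and the resultant vanishes,
$4(σ_2-τ_2)H = -z\,(2(σ_2-τ_2)x - (σ_3-τ_3)z)^2$, whose zeros are $(1:0:0)$ and $(ξ:0:1)$.
-/

open MvPolynomial

namespace MvPolynomial

section Homogeneous

variable {σ R : Type*} [CommSemiring R]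

theorem IsHomogeneous.eval_smul {F : MvPolynomial σ R} {n : ℕ} (hF : F.IsHomogeneous n)
    (c : R) (v : σ → R) : eval (c • v) F = c ^ n * eval v F := by
  rw [eval_eq, eval_eq, Finset.mul_sum]
  refine Finset.sum_congr rfl fun d hd => ?_
  have hdeg : ∑ i ∈ d.support, d i = n := by
    rw [← hF (mem_support_iff.mp hd), Finsupp.weight_apply]
    simp [Finsupp.sum]
  simp only [Pi.smul_apply, smul_eq_mul, mul_pow, Finset.prod_mul_distrib,
    Finset.prod_pow_eq_pow_sum, hdeg]
  ring

def IsSingularPoint (F : MvPolynomial σ R) (v : σ → R) : Prop :=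
  eval v F = 0 ∧ ∀ i, eval v (pderiv i F) = 0

theorem isSingularPoint_iff_fin_three (F : MvPolynomial (Fin 3) R) (v : Fin 3 → R) :
    IsSingularPoint F v ↔ eval v F = 0 ∧ eval v (pderiv 0 F) = 0 ∧
      eval v (pderiv 1 F) = 0 ∧ eval v (pderiv 2 F) = 0 := by
  simp [IsSingularPoint, Fin.forall_fin_succ]

theorem IsHomogeneous.isSingularPoint_smul_iff [NoZeroDivisors R] {F : MvPolynomial σ R}
    {n : ℕ} (hF : F.IsHomogeneous n) {c : R} (hc : c ≠ 0) (v : σ → R) :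
    IsSingularPoint F (c • v) ↔ IsSingularPoint F v := by
  simp only [IsSingularPoint, hF.eval_smul, hF.pderiv.eval_smul, mul_eq_zero,
    pow_ne_zero n hc, pow_ne_zero (n - 1) hc, false_or]

theorem IsHomogeneous.isSingularPoint_mk_rep_iff {K : Type*} [Field K] {F : MvPolynomial σ K}
    {n : ℕ} (hF : F.IsHomogeneous n) (v : σ → K) (hv : v ≠ 0) :
    IsSingularPoint F (Projectivization.mk K v hv).rep ↔ IsSingularPoint F v := by
  obtain ⟨c, hc⟩ := Projectivization.exists_smul_eq_mk_rep K v hv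
  rw [← hc, Units.smul_def]
  exact hF.isSingularPoint_smul_iff c.ne_zero v

end Homogeneous

theorem eval_aeval_X_X_one {R : Type*} [CommSemiring R] (w : Fin 2 → R)
    (p : MvPolynomial (Fin 3) R) : eval w (aeval ![X 0, X 1, 1] p) = eval ![w 0, w 1, 1] p := by
  rw [map_aeval, coe_eval₂Hom]
  congr 1
  · ext; simp
  · funext i; fin_cases i <;> simp

/-- By homogeneity, `z * (F - G)` vanishes at every point, hence is `0`. -/
theorem IsHomogeneous.eq_of_aeval_X_X_one_eq {k : Type*} [Field k] [Infinite k]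
    {F G : MvPolynomial (Fin 3) k} {n : ℕ} (hF : F.IsHomogeneous n) (hG : G.IsHomogeneous n)
    (h : MvPolynomial.aeval ![(X 0 : MvPolynomial (Fin 2) k), X 1, 1] F =
      MvPolynomial.aeval ![X 0, X 1, 1] G) : F = G := by
  have hD : (F - G).IsHomogeneous n := hF.sub hG
  suffices X 2 * (F - G) = 0 by simpa [X_ne_zero, sub_eq_zero] using this
  refine MvPolynomial.funext fun r => ?_
  rw [eval_mul, eval_X, map_zero]
  rcases eq_or_ne (r 2) 0 with hr | hr
  · rw [hr, zero_mul]
  have hr' : r = r 2 • ![r 0 / r 2, r 1 / r 2, 1] := by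
    funext i; fin_cases i <;> simp [mul_div_cancel₀ _ hr]
  have hchart : eval ![r 0 / r 2, r 1 / r 2, 1] (F - G) = 0 := by
    have := eval_aeval_X_X_one ![r 0 / r 2, r 1 / r 2] (F - G)
    rw [map_sub, h, sub_self, map_zero] at this
    simpa using this.symm
  nth_rw 2 [hr']
  rw [hD.eval_smul, hchart, mul_zero, mul_zero]

end MvPolynomial

theorem Projectivization.mk_eq_mk_iff_eq_smul {K ι : Type*} [Field K] {v w : ι → K}
    (hv : v ≠ 0) (hw : w ≠ 0) {i : ι} (hwi : w i = 1) :
    Projectivization.mk K v hv = Projectivization.mk K w hw ↔ v = v i • w := by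
  rw [Projectivization.mk_eq_mk_iff']
  refine ⟨?_, fun h => ⟨_, h.symm⟩⟩
  rintro ⟨a, rfl⟩
  simp [hwi]

theorem Projectivization.eq_three_points_of_forall_mk_mem_iff {K : Type*} [Field K] (ξ : K)
    {S : Set (Projectivization K (Fin 3 → K))}
    (hS : ∀ v hv, Projectivization.mk K v hv ∈ S ↔
      (v 0 = 0 ∧ v 2 = 0) ∨ (v 1 = 0 ∧ v 2 = 0) ∨ (v 1 = 0 ∧ v 0 = v 2 * ξ)) :
    S = {Projectivization.mk K (![0, 1, 0] : Fin 3 → K)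
            (by intro hc; simpa using congrFun hc 1),
          Projectivization.mk K (![1, 0, 0] : Fin 3 → K)
            (by intro hc; simpa using congrFun hc 0),
          Projectivization.mk K (![ξ, 0, 1] : Fin 3 → K)
            (by intro hc; simpa using congrFun hc 2)} := by
  ext P
  rw [← P.mk_rep, hS, Set.mem_insert_iff, Set.mem_insert_iff, Set.mem_singleton_iff,
    mk_eq_mk_iff_eq_smul _ _ (i := 1) (by simp), mk_eq_mk_iff_eq_smul _ _ (i := 0) (by simp),
    mk_eq_mk_iff_eq_smul _ _ (i := 2) (by simp)]
  simp only [Matrix.smul_cons, smul_eq_mul, mul_zero, mul_one, Matrix.smul_empty, funext_iff,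
    Fin.forall_fin_succ, Matrix.cons_val_zero, Matrix.cons_val_succ, Fin.succ_zero_eq_one,
    Matrix.cons_val_fin_one, Fin.succ_one_eq_two, IsEmpty.forall_iff, and_true, true_and]
  tauto

theorem Projectivization.ncard_mk_points_eq_three {K : Type*} [Field K] (ξ : K) :
    ({Projectivization.mk K (![0, 1, 0] : Fin 3 → K)
            (by intro hc; simpa using congrFun hc 1),
          Projectivization.mk K (![1, 0, 0] : Fin 3 → K)
            (by intro hc; simpa using congrFun hc 0),
          Projectivization.mk K (![ξ, 0, 1] : Fin 3 → K)
            (by intro hc; simpa using congrFun hc 2)} : Set _).ncard = 3 := by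
  refine Set.ncard_eq_three.mpr ⟨_, _, _, ?_, ?_, ?_, rfl⟩
  · rw [Ne, mk_eq_mk_iff_eq_smul _ _ (i := 0) (by simp)]
    simp [funext_iff, Fin.forall_fin_succ]
  all_goals
    rw [Ne, mk_eq_mk_iff_eq_smul _ _ (i := 2) (by simp)]
    simp [funext_iff, Fin.forall_fin_succ]

theorem det_sylvester_quadratic {R : Type*} [CommRing R] (a b c : R) :
    Matrix.det !![-a, b, -c; -2 * a, b, 0; 0, -2 * a, b] = a * (b ^ 2 - 4 * a * c) := by
  simp only [Matrix.det_fin_three, Matrix.of_apply, Matrix.cons_val', Matrix.cons_val_zero,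
    Matrix.cons_val_fin_one, Matrix.cons_val_one, Matrix.cons_val]
  ring

section QuarticCurve

variable {k : Type*} [Field k]

noncomputable def binaryQuartic (r₁ r₂ r₃ r₄ : k) : MvPolynomial (Fin 3) k :=
  (X 0 - C r₁ * X 2) * (X 0 - C r₂ * X 2) * (X 0 - C r₃ * X 2) * (X 0 - C r₄ * X 2)

noncomputable def binaryCubic (c₃ c₂ c₁ c₀ : k) : MvPolynomial (Fin 3) k :=
  C c₃ * X 0 ^ 3 - C c₂ * X 0 ^ 2 * X 2 + C c₁ * X 0 * X 2 ^ 2 - C c₀ * X 2 ^ 3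

noncomputable def curveEquation (Φ₁ Φ₂ H : MvPolynomial (Fin 3) k) : MvPolynomial (Fin 3) k :=
  X 1 ^ 4 * X 2 ^ 2 - C 2 * (Φ₁ + Φ₂) * X 1 ^ 2 + H ^ 2

theorem isHomogeneous_binaryQuartic (r₁ r₂ r₃ r₄ : k) :
    (binaryQuartic r₁ r₂ r₃ r₄).IsHomogeneous 4 := by
  have h : ∀ r : k, (X 0 - C r * X 2 : MvPolynomial (Fin 3) k).IsHomogeneous 1 := fun r =>
    (isHomogeneous_X k 0).sub (isHomogeneous_C_mul_X r 2)
  exact (((h r₁).mul (h r₂)).mul (h r₃)).mul (h r₄)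

theorem isHomogeneous_binaryCubic (c₃ c₂ c₁ c₀ : k) :
    (binaryCubic c₃ c₂ c₁ c₀).IsHomogeneous 3 :=
  (((isHomogeneous_C_mul_X_pow c₃ 0 3).sub
    ((isHomogeneous_C_mul_X_pow c₂ 0 2).mul (isHomogeneous_X k 2))).add
    (((isHomogeneous_C_mul_X c₁ 0).mul (isHomogeneous_X_pow 2 2)))).sub
    (isHomogeneous_C_mul_X_pow c₀ 2 3)

theorem MvPolynomial.IsHomogeneous.curveEquation {Φ₁ Φ₂ H : MvPolynomial (Fin 3) k}
    (hΦ₁ : Φ₁.IsHomogeneous 4) (hΦ₂ : Φ₂.IsHomogeneous 4) (hH : H.IsHomogeneous 3) :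
    (curveEquation Φ₁ Φ₂ H).IsHomogeneous 6 :=
  (((isHomogeneous_X_pow 1 4).mul (isHomogeneous_X_pow 2 2)).sub
    (((hΦ₁.add hΦ₂).C_mul 2).mul (isHomogeneous_X_pow 1 2))).add (hH.pow 2)

theorem pderiv_one_binaryQuartic (r₁ r₂ r₃ r₄ : k) :
    pderiv 1 (binaryQuartic r₁ r₂ r₃ r₄) = 0 := by
  simp [binaryQuartic, pderiv_X]

theorem pderiv_one_binaryCubic (c₃ c₂ c₁ c₀ : k) :
    pderiv 1 (binaryCubic c₃ c₂ c₁ c₀) = 0 := by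
  simp [binaryCubic, pderiv_X]

theorem eval_pderiv_zero_binaryQuartic_ne_zero {r₁ r₂ r₃ r₄ : k}
    (hr : [r₁, r₂, r₃, r₄].Pairwise (· ≠ ·)) {v : Fin 3 → k} (hz : v 2 ≠ 0)
    (hv : eval v (binaryQuartic r₁ r₂ r₃ r₄) = 0) :
    eval v (pderiv 0 (binaryQuartic r₁ r₂ r₃ r₄)) ≠ 0 := by
  simp only [List.pairwise_cons, List.mem_cons, List.not_mem_nil, or_false, forall_eq_or_imp,
    forall_eq, List.Pairwise.nil, and_true] at hr
  simp only [binaryQuartic, map_mul, map_sub, eval_X, eval_C, mul_eq_zero, sub_eq_zero] at hv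
  simp only [binaryQuartic, Derivation.leibniz, map_sub, pderiv_X, smul_eq_mul, map_add, map_mul,
    eval_X, eval_C]
  rcases hv with ((h | h) | h) | h <;> rw [h] <;> simp [sub_eq_zero, mul_left_inj' hz, hr, Ne.symm]

theorem isSingularPoint_curveEquation_of_eval_eq_zero {Φ₁ Φ₂ H : MvPolynomial (Fin 3) k}
    {v : Fin 3 → k} (hy : v 1 = 0) (hH : eval v H = 0) :
    IsSingularPoint (curveEquation Φ₁ Φ₂ H) v := by
  refine ⟨?_, fun i => ?_⟩
  · simp [curveEquation, hy, hH]
  · fin_cases i <;> simp [curveEquation, hy, hH, pderiv_X]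

theorem isSingularPoint_curveEquation_of_eq_zero {α₁ α₂ α₃ α₄ β₁ β₂ β₃ β₄ c₃ c₂ c₁ c₀ : k}
    {v : Fin 3 → k} (hx : v 0 = 0) (hz : v 2 = 0) :
    IsSingularPoint (curveEquation (binaryQuartic α₁ α₂ α₃ α₄) (binaryQuartic β₁ β₂ β₃ β₄)
      (binaryCubic c₃ c₂ c₁ c₀)) v := by
  refine ⟨?_, fun i => ?_⟩
  · simp [curveEquation, binaryQuartic, binaryCubic, hx, hz]
  · fin_cases i <;> simp [curveEquation, binaryQuartic, binaryCubic, hx, hz, pderiv_X]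

/-- `a, b, a', b', h, h'` stand for the values of `Φ₁, Φ₂, ∂ₓΦ₁, ∂ₓΦ₂, H, ∂ₓH` at a point with
`y z ≠ 0`, and `hF, hFx, hFy` for `F = F_x = F_y = 0` there. -/
theorem double_root_of_singular {a b a' b' h h' y z : k} (h2 : (2 : k) ≠ 0) (hy : y ≠ 0)
    (hz : z ≠ 0) (hh : z * h = b - a) (hh' : z * h' = b' - a')
    (hF : y ^ 4 * z ^ 2 - 2 * (a + b) * y ^ 2 + h ^ 2 = 0)
    (hFx : (a' + b') * y ^ 2 = h * h') (hFy : y ^ 2 * z ^ 2 = a + b) :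
    (a = 0 ∧ a' = 0) ∨ (b = 0 ∧ b' = 0) := by
  have hab : 2 * 2 * (a * b) = 0 := by
    linear_combination (z * h + b - a) * hh - z ^ 2 * hF + (y ^ 2 * z ^ 2 - a - b) * hFy
  have hab' : 2 * (a' * b + a * b') = 0 := by
    linear_combination z ^ 2 * hFx + (z * h') * hh + (b - a) * hh' - (a' + b') * hFy
  replace hab := (mul_eq_zero.mp hab).resolve_left (mul_ne_zero h2 h2)
  replace hab' := (mul_eq_zero.mp hab').resolve_left h2
  have hyz : a + b ≠ 0 := hFy ▸ by positivity
  rcases mul_eq_zero.mp hab with ha | hb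
  · subst ha
    exact .inl ⟨rfl, by simp_all⟩
  · subst hb
    exact .inr ⟨rfl, by simp_all⟩

theorem isSingularPoint_curveEquation_iff (h2 : (2 : k) ≠ 0)
    {α₁ α₂ α₃ α₄ β₁ β₂ β₃ β₄ c₃ c₂ c₁ c₀ : k}
    (hα : [α₁, α₂, α₃, α₄].Pairwise (· ≠ ·)) (hβ : [β₁, β₂, β₃, β₄].Pairwise (· ≠ ·))
    (hH : X 2 * binaryCubic c₃ c₂ c₁ c₀ =
      binaryQuartic β₁ β₂ β₃ β₄ - binaryQuartic α₁ α₂ α₃ α₄)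
    (v : Fin 3 → k) :
    IsSingularPoint (curveEquation (binaryQuartic α₁ α₂ α₃ α₄) (binaryQuartic β₁ β₂ β₃ β₄)
      (binaryCubic c₃ c₂ c₁ c₀)) v ↔
      (v 0 = 0 ∧ v 2 = 0) ∨ (v 1 = 0 ∧ eval v (binaryCubic c₃ c₂ c₁ c₀) = 0) := by
  set Φ₁ := binaryQuartic α₁ α₂ α₃ α₄
  set Φ₂ := binaryQuartic β₁ β₂ β₃ β₄
  set H := binaryCubic c₃ c₂ c₁ c₀
  have hval : v 2 * eval v H = eval v Φ₂ - eval v Φ₁ := by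
    simpa using congrArg (eval v) hH
  have hval' : v 2 * eval v (pderiv 0 H) = eval v (pderiv 0 Φ₂) - eval v (pderiv 0 Φ₁) := by
    simpa [pderiv_X] using congrArg (fun p => eval v (pderiv 0 p)) hH
  have hΦ₁ : pderiv 1 Φ₁ = 0 := pderiv_one_binaryQuartic ..
  have hΦ₂ : pderiv 1 Φ₂ = 0 := pderiv_one_binaryQuartic ..
  have hH₁ : pderiv 1 H = 0 := pderiv_one_binaryCubic ..
  constructor
  · rintro ⟨hF, hD⟩
    have hFx := hD 0
    have hFy := hD 1
    simp only [curveEquation, Fin.isValue, map_add, map_sub, map_mul, map_pow, eval_X, eval_C,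
      Derivation.leibniz, Derivation.leibniz_pow, Nat.add_one_sub_one, pow_one, pderiv_X, ne_eq,
      Fin.reduceEq, not_false_eq_true, Pi.single_eq_of_ne, smul_eq_mul, mul_zero,
      one_ne_zero, add_zero, derivation_C, zero_add, zero_sub, nsmul_eq_mul, Nat.cast_ofNat, map_neg,
      eval_ofNat, Pi.single_eq_same, mul_one, hΦ₁, hΦ₂, hH₁] at hF hFx hFy
    by_cases hy : v 1 = 0
    · exact .inr ⟨hy, by simpa [hy] using hF⟩
    have hsum : v 1 ^ 2 * v 2 ^ 2 = eval v Φ₁ + eval v Φ₂ := by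
      have : (2 * 2 * v 1) * (v 1 ^ 2 * v 2 ^ 2 - (eval v Φ₁ + eval v Φ₂)) = 0 := by
        linear_combination hFy
      simpa [h2, hy, sub_eq_zero] using this
    by_cases hz : v 2 = 0
    · refine .inl ⟨?_, hz⟩
      simpa [Φ₁, Φ₂, binaryQuartic, hz, hy, h2, ← two_mul] using hsum
    exfalso
    rcases double_root_of_singular h2 hy hz hval hval' (by linear_combination hF)
      (mul_left_cancel₀ h2 (by linear_combination -hFx)) hsum with ⟨ha, ha'⟩ | ⟨hb, hb'⟩
    · exact eval_pderiv_zero_binaryQuartic_ne_zero hα hz ha ha'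
    · exact eval_pderiv_zero_binaryQuartic_ne_zero hβ hz hb hb'
  · rintro (⟨hx, hz⟩ | ⟨hy, hH0⟩)
    exacts [isSingularPoint_curveEquation_of_eq_zero hx hz,
      isSingularPoint_curveEquation_of_eval_eq_zero hy hH0]

theorem eval_binaryCubic_eq_zero_iff {c₂ c₁ c₀ : k} (h2 : (2 : k) ≠ 0) (hc₂ : c₂ ≠ 0)
    (hdisc : c₁ ^ 2 = 4 * c₂ * c₀) (v : Fin 3 → k) :
    eval v (binaryCubic 0 c₂ c₁ c₀) = 0 ↔ v 2 = 0 ∨ v 0 = v 2 * (c₁ / (2 * c₂)) := by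
  have key : 4 * c₂ * eval v (binaryCubic 0 c₂ c₁ c₀) =
      -(v 2 * (2 * c₂ * v 0 - c₁ * v 2) ^ 2) := by
    simp only [binaryCubic, map_sub, map_add, map_mul, map_pow, eval_C, eval_X]
    linear_combination v 2 ^ 3 * hdisc
  have h4 : (4 : k) * c₂ ≠ 0 :=
    mul_ne_zero (by rw [show (4 : k) = 2 * 2 by norm_num]; exact mul_ne_zero h2 h2) hc₂
  rw [← mul_right_inj' h4, mul_zero, key, neg_eq_zero, mul_eq_zero, pow_eq_zero_iff two_ne_zero,
    sub_eq_zero, mul_div_assoc', eq_div_iff (mul_ne_zero h2 hc₂)]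
  exact or_congr_right ⟨fun h => by linear_combination h, fun h => by linear_combination h⟩

end QuarticCurve

theorem stmt_16
    {k : Type*} [Field k] [IsAlgClosed k]
    (p : ℕ) [CharP k p] (hp : p = 0 ∨ 5 ≤ p)
    (α1 α2 α3 α4 β1 β2 β3 β4 : k)
    (hdist : ([α1, α2, α3, α4, β1, β2, β3, β4] : List k).Pairwise (· ≠ ·))
    (σ1 σ2 σ3 σ4 τ1 τ2 τ3 τ4 : k)
    (hσ1 : σ1 = α1 + α2 + α3 + α4)
    (hσ2 : σ2 = α1 * α2 + α1 * α3 + α1 * α4 + α2 * α3 + α2 * α4 + α3 * α4)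
    (hσ3 : σ3 = α1 * α2 * α3 + α1 * α2 * α4 + α1 * α3 * α4 + α2 * α3 * α4)
    (hσ4 : σ4 = α1 * α2 * α3 * α4)
    (hτ1 : τ1 = β1 + β2 + β3 + β4)
    (hτ2 : τ2 = β1 * β2 + β1 * β3 + β1 * β4 + β2 * β3 + β2 * β4 + β3 * β4)
    (hτ3 : τ3 = β1 * β2 * β3 + β1 * β2 * β4 + β1 * β3 * β4 + β2 * β3 * β4)
    (hτ4 : τ4 = β1 * β2 * β3 * β4)
    (φ1 φ2 f : MvPolynomial (Fin 2) k)
    (hφ1 : φ1 = (X 0 - C α1) * (X 0 - C α2) * (X 0 - C α3) * (X 0 - C α4))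
    (hφ2 : φ2 = (X 0 - C β1) * (X 0 - C β2) * (X 0 - C β3) * (X 0 - C β4))
    (hf : f = X 1 ^ 4 - C 2 * (φ1 + φ2) * X 1 ^ 2 + (φ1 - φ2) ^ 2)
    (F : MvPolynomial (Fin 3) k)
    (hFhom : F.IsHomogeneous 6)
    (hFf : aeval ![(X 0 : MvPolynomial (Fin 2) k), X 1, 1] F = f)
    (Sing : Set (Projectivization k (Fin 3 → k)))
    (hSing : ∀ P : Projectivization k (Fin 3 → k),
      P ∈ Sing ↔ (eval P.rep F = 0 ∧
        eval P.rep (pderiv 0 F) = 0 ∧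
        eval P.rep (pderiv 1 F) = 0 ∧
        eval P.rep (pderiv 2 F) = 0))
    -- resq = Res_x(h1, h1') where (σ1 = τ1 and) h1 is the quadratic
    -- -(σ2-τ2)x² + (σ3-τ3)x - (σ4-τ4), as a Sylvester determinant
    (resq : k)
    (hresq : resq = Matrix.det
      !![-(σ2 - τ2), σ3 - τ3, -(σ4 - τ4);
         -2 * (σ2 - τ2), σ3 - τ3, 0;
         0, -2 * (σ2 - τ2), σ3 - τ3])
    (hστ1 : σ1 = τ1) (hστ2 : σ2 ≠ τ2) (hrq : resq = 0) :
    (∀ ξ : k, Projectivization.mk k (![ξ, 0, 1] : Fin 3 → k)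
        (by intro hc; simpa using congrFun hc 2) ∈ Sing
      ↔ ξ = (σ3 - τ3) / (2 * (σ2 - τ2)))
    ∧ Sing = {Projectivization.mk k (![0, 1, 0] : Fin 3 → k)
                (by intro hc; simpa using congrFun hc 1),
              Projectivization.mk k (![1, 0, 0] : Fin 3 → k)
                (by intro hc; simpa using congrFun hc 0),
              Projectivization.mk k
                (![(σ3 - τ3) / (2 * (σ2 - τ2)), 0, 1] : Fin 3 → k)
                (by intro hc; simpa using congrFun hc 2)}
    ∧ Sing.ncard = 3 := by
  have h2 : (2 : k) ≠ 0 := Ring.two_ne_zero (by rw [ringChar.eq k p]; omega)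
  have he₂ : σ2 - τ2 ≠ 0 := sub_ne_zero.mpr hστ2
  rw [hresq, det_sylvester_quadratic] at hrq
  have hdisc := sub_eq_zero.mp ((mul_eq_zero.mp hrq).resolve_left he₂)
  obtain ⟨hα, hβ, -⟩ :=
    (List.pairwise_append (l₁ := [α1, α2, α3, α4]) (l₂ := [β1, β2, β3, β4])).mp hdist
  have hH : X 2 * binaryCubic (σ1 - τ1) (σ2 - τ2) (σ3 - τ3) (σ4 - τ4) =
      binaryQuartic β1 β2 β3 β4 - binaryQuartic α1 α2 α3 α4 := by
    subst hσ1 hσ2 hσ3 hσ4 hτ1 hτ2 hτ3 hτ4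
    simp only [binaryCubic, binaryQuartic, map_sub, map_add, map_mul]
    ring
  have hF : F = curveEquation (binaryQuartic α1 α2 α3 α4) (binaryQuartic β1 β2 β3 β4)
      (binaryCubic (σ1 - τ1) (σ2 - τ2) (σ3 - τ3) (σ4 - τ4)) := by
    refine hFhom.eq_of_aeval_X_X_one_eq (.curveEquation (isHomogeneous_binaryQuartic ..)
      (isHomogeneous_binaryQuartic ..) (isHomogeneous_binaryCubic ..)) ?_
    rw [hFf, hf, hφ1, hφ2]
    subst hσ1 hσ2 hσ3 hσ4 hτ1 hτ2 hτ3 hτ4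
    simp only [aeval_eq_bind₁, curveEquation, binaryQuartic, binaryCubic,
      map_add, map_sub, map_mul, map_pow, bind₁_X_right, Matrix.cons_val_one, Matrix.cons_val_zero,
      Matrix.cons_val, one_pow, mul_one, algHom_C, algebraMap_eq]
    ring
  set ξ := (σ3 - τ3) / (2 * (σ2 - τ2))
  have hmem : ∀ v hv, Projectivization.mk k v hv ∈ Sing ↔
      (v 0 = 0 ∧ v 2 = 0) ∨ (v 1 = 0 ∧ v 2 = 0) ∨ (v 1 = 0 ∧ v 0 = v 2 * ξ) := by
    intro v hv
    rw [hSing, ← isSingularPoint_iff_fin_three, hFhom.isSingularPoint_mk_rep_iff, hF,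
      isSingularPoint_curveEquation_iff h2 hα hβ hH, hστ1, sub_self,
      eval_binaryCubic_eq_zero_iff h2 he₂ hdisc, and_or_left]
  have hSing_eq := Projectivization.eq_three_points_of_forall_mk_mem_iff ξ hmem
  exact ⟨fun ξ' => by simp [hmem], hSing_eq,
    hSing_eq ▸ Projectivization.ncard_mk_points_eq_three ξ⟩
end

section
/- Assume σ1 = τ1, σ2 = τ2, and σ3 ≠ τ3. Then the projective curve F = 0 has a unique singular point of the form (x:0:1), namely (ξ:0:1) with ξ = (σ4−τ4)/(σ3−τ3), and Sing = {(ξ:0:1), (0:1:0), (1:0:0)} has exactly 3 elements. -/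
/-!
Since `σ1 = τ1` and `σ2 = τ2`, `φ1 - φ2` is the linear polynomial `d - cx` with `c = σ3 - τ3` and
`d = σ4 - τ4`. A form over an infinite field is determined by its dehomogenization, so `F` is the
explicit sextic `y⁴z² - 2(Φ1 + Φ2)y² + (dz - cx)²z⁴`, `Φi` the quartic form homogenizing `φi`.
At infinity `F = -4x⁴y²`, which leaves `(1:0:0)` and `(0:1:0)`, and both are singular. In the chart
`z = 1` the curve meets `y = 0` in the double point `(d - cx)² = 0`, i.e. at `x = d/c`. Off `y = 0`,
`F_y = 0` gives `y² = φ1 + φ2`, and then `F = F_x = 0` become `φ1 φ2 = (φ1 φ2)' = 0`: `x` would be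
a multiple root of `φ1 φ2`, whose eight roots are distinct.
-/

open MvPolynomial
open Polynomial (derivative)

namespace MvPolynomial.IsHomogeneous

variable {R σ : Type*} [CommRing R] {F : MvPolynomial σ R} {n : ℕ}

theorem eval_smul_s17 (hF : F.IsHomogeneous n) (c : R) (v : σ → R) :
    eval (c • v) F = c ^ n * eval v F := by
  rw [eval_eq, eval_eq, Finset.mul_sum]
  refine Finset.sum_congr rfl fun d hd => ?_
  simp_rw [Pi.smul_apply, smul_eq_mul, mul_pow, Finset.prod_mul_distrib,
    Finset.prod_pow_eq_pow_sum, ← hF.degree_eq_sum_deg_support hd]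
  ring

theorem eq_of_eval_eq_of_apply_eq_one {K : Type*} [Field K] [Infinite K]
    {F G : MvPolynomial σ K} (hF : F.IsHomogeneous n) (hG : G.IsHomogeneous n) (i : σ)
    (h : ∀ v : σ → K, v i = 1 → eval v F = eval v G) : F = G := by
  refine mul_left_cancel₀ (X_ne_zero i)
    (((isHomogeneous_X K i).mul hF).funext ((isHomogeneous_X K i).mul hG) fun v => ?_)
  rcases eq_or_ne (v i) 0 with hvi | hvi
  · simp [hvi]
  · have hv : v = v i • ((v i)⁻¹ • v) := by rw [smul_smul, mul_inv_cancel₀ hvi, one_smul]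
    have h1 : ((v i)⁻¹ • v) i = 1 := by simp [inv_mul_cancel₀ hvi]
    rw [map_mul, map_mul, hv, hF.eval_smul_s17, hG.eval_smul_s17, h _ h1]

end MvPolynomial.IsHomogeneous

theorem Polynomial.separable_prod_X_sub_C_of_nodup {K : Type*} [Field K] {l : List K}
    (hl : l.Nodup) : (l.map fun a => X - C a).prod.Separable := by
  classical
  rw [← List.prod_toFinset _ hl]
  exact separable_prod_X_sub_C_iff'.2 fun _ _ _ _ => id

theorem Projectivization.apply_eq_zero_of_mk_eq_mk {K ι : Type*} [Field K] {v w : ι → K}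
    (hv : v ≠ 0) (hw : w ≠ 0) (h : mk K v hv = mk K w hw) {i : ι} (hwi : w i = 0) :
    v i = 0 := by
  obtain ⟨a, rfl⟩ := (mk_eq_mk_iff' K v w hv hw).1 h
  simp [hwi]

theorem four_ne_zero_of_charP {K : Type*} [Field K] (p : ℕ) [CharP K p]
    (hp : p = 0 ∨ 5 ≤ p) : (4 : K) ≠ 0 := by
  have : ((4 : ℕ) : K) ≠ 0 := by
    rw [Ne, CharP.cast_eq_zero_iff K p]
    intro hdvd
    rcases hp with rfl | hp
    · simp at hdvd
    · exact absurd (Nat.le_of_dvd four_pos hdvd) (by omega)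
  exact_mod_cast this

section

variable {k : Type*} [Field k]

theorem MvPolynomial.eval_aeval_dehomogenize (F : MvPolynomial (Fin 3) k) (x y : k) :
    eval ![x, y] (aeval ![(X 0 : MvPolynomial (Fin 2) k), X 1, 1] F) = eval ![x, y, 1] F := by
  change aeval _ (aeval _ F) = aeval _ F
  rw [← AlgHom.comp_apply, comp_aeval]
  congr 2
  ext i; fin_cases i <;> simp

def IsSingularAt (F : MvPolynomial (Fin 3) k) (w : Fin 3 → k) : Prop :=
  eval w F = 0 ∧ eval w (pderiv 0 F) = 0 ∧ eval w (pderiv 1 F) = 0 ∧ eval w (pderiv 2 F) = 0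

theorem MvPolynomial.IsHomogeneous.isSingularAt_smul_iff {F : MvPolynomial (Fin 3) k} {n : ℕ}
    (hF : F.IsHomogeneous n) {c : k} (hc : c ≠ 0) (w : Fin 3 → k) :
    IsSingularAt F (c • w) ↔ IsSingularAt F w := by
  simp only [IsSingularAt, hF.eval_smul_s17, (hF.pderiv (i := 0)).eval_smul_s17,
    (hF.pderiv (i := 1)).eval_smul_s17, (hF.pderiv (i := 2)).eval_smul_s17, mul_eq_zero,
    pow_eq_zero_iff', hc, false_and, false_or]

theorem MvPolynomial.IsHomogeneous.isSingularAt_mk_rep_iff {F : MvPolynomial (Fin 3) k}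
    {n : ℕ} (hF : F.IsHomogeneous n) {w : Fin 3 → k} (hw : w ≠ 0) :
    IsSingularAt F (Projectivization.mk k w hw).rep ↔ IsSingularAt F w := by
  obtain ⟨a, ha⟩ := Projectivization.exists_smul_eq_mk_rep k w hw
  rw [← ha, Units.smul_def, hF.isSingularAt_smul_iff a.ne_zero]

/-- The hypotheses say that `(a, b)`, `b ≠ 0`, is a singular point of
`y⁴ - 2(u + v)y² + (u - v)² = 0`; eliminating `b² = u + v` turns `f` into `-4uv` and `f_x` into
`-4(uv)'`. -/
theorem eval_mul_eq_zero_and_eval_derivative_mul_eq_zero {u v : Polynomial k} {a b : k}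
    (h4 : (4 : k) ≠ 0) (hb : b ≠ 0)
    (hf : b ^ 4 - 2 * (u.eval a + v.eval a) * b ^ 2 + ((u - v).eval a) ^ 2 = 0)
    (hfx : -2 * ((derivative u).eval a + (derivative v).eval a) * b ^ 2 +
      2 * (u - v).eval a * (derivative (u - v)).eval a = 0)
    (hfy : 4 * b ^ 3 - 4 * (u.eval a + v.eval a) * b = 0) :
    (u * v).eval a = 0 ∧ (derivative (u * v)).eval a = 0 := by
  simp only [Polynomial.eval_sub, Polynomial.derivative_sub, Polynomial.eval_mul,
    Polynomial.derivative_mul, Polynomial.eval_add] at *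
  have hb2 : b ^ 2 = u.eval a + v.eval a := by
    have : (4 * b) * (b ^ 2 - (u.eval a + v.eval a)) = 0 := by linear_combination hfy
    exact sub_eq_zero.1 ((mul_eq_zero.1 this).resolve_left (mul_ne_zero h4 hb))
  constructor <;> refine mul_left_cancel₀ h4 ?_
  · linear_combination (-1) * hf + (b ^ 2 - u.eval a - v.eval a) * hb2
  · linear_combination (-1) * hfx - 2 * ((derivative u).eval a + (derivative v).eval a) * hb2

noncomputable def quartic (a1 a2 a3 a4 : k) : Polynomial k :=
  (.X - .C a1) * (.X - .C a2) * (.X - .C a3) * (.X - .C a4)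

theorem quartic_sub_quartic {a1 a2 a3 a4 b1 b2 b3 b4 : k}
    (h1 : a1 + a2 + a3 + a4 = b1 + b2 + b3 + b4)
    (h2 : a1 * a2 + a1 * a3 + a1 * a4 + a2 * a3 + a2 * a4 + a3 * a4 =
      b1 * b2 + b1 * b3 + b1 * b4 + b2 * b3 + b2 * b4 + b3 * b4) :
    quartic a1 a2 a3 a4 - quartic b1 b2 b3 b4 =
      .C (a1 * a2 * a3 * a4 - b1 * b2 * b3 * b4) -
        .C (a1 * a2 * a3 + a1 * a2 * a4 + a1 * a3 * a4 + a2 * a3 * a4 -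
          (b1 * b2 * b3 + b1 * b2 * b4 + b1 * b3 * b4 + b2 * b3 * b4)) * .X := by
  have h1' := congrArg Polynomial.C h1
  have h2' := congrArg Polynomial.C h2
  simp only [quartic, map_add, map_sub, map_mul] at h1' h2' ⊢
  linear_combination (-Polynomial.X ^ 3) * h1' + Polynomial.X ^ 2 * h2'

theorem separable_quartic_mul_quartic {a1 a2 a3 a4 b1 b2 b3 b4 : k}
    (h : [a1, a2, a3, a4, b1, b2, b3, b4].Nodup) :
    (quartic a1 a2 a3 a4 * quartic b1 b2 b3 b4).Separable := by
  convert Polynomial.separable_prod_X_sub_C_of_nodup h using 1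
  simp only [quartic, List.map_cons, List.map_nil, List.prod_cons, List.prod_nil]
  ring

noncomputable def quarticForm (a1 a2 a3 a4 : k) : MvPolynomial (Fin 3) k :=
  (X 0 - C a1 * X 2) * (X 0 - C a2 * X 2) * (X 0 - C a3 * X 2) * (X 0 - C a4 * X 2)

theorem isHomogeneous_quarticForm (a1 a2 a3 a4 : k) :
    (quarticForm a1 a2 a3 a4).IsHomogeneous 4 := by
  have h (a : k) : (X 0 - C a * X 2 : MvPolynomial (Fin 3) k).IsHomogeneous 1 :=
    (isHomogeneous_X k 0).sub (isHomogeneous_C_mul_X a 2)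
  exact (((h a1).mul (h a2)).mul (h a3)).mul (h a4)

theorem eval_quarticForm (a1 a2 a3 a4 x y : k) :
    eval ![x, y, 1] (quarticForm a1 a2 a3 a4) = (quartic a1 a2 a3 a4).eval x := by
  simp [quarticForm, quartic]

theorem eval_pderiv_quarticForm (a1 a2 a3 a4 x y : k) :
    eval ![x, y, 1] (pderiv 0 (quarticForm a1 a2 a3 a4)) =
      (derivative (quartic a1 a2 a3 a4)).eval x := by
  simp only [quarticForm, Derivation.leibniz, map_sub, pderiv_X, Pi.single_eq_same, ne_eq,
    Fin.reduceEq, not_false_eq_true, Pi.single_eq_of_ne, smul_eq_mul, mul_zero, derivation_C,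
    add_zero, sub_zero, mul_one, map_add, map_mul, eval_X, Matrix.cons_val_zero, eval_C,
    Matrix.cons_val, quartic, Polynomial.derivative_mul, Polynomial.derivative_X,
    Polynomial.derivative_C, one_mul, Polynomial.eval_add, Polynomial.eval_mul,
    Polynomial.eval_sub, Polynomial.eval_X, Polynomial.eval_C]
  ring

theorem pderiv_one_quarticForm (a1 a2 a3 a4 : k) : pderiv 1 (quarticForm a1 a2 a3 a4) = 0 := by
  simp [quarticForm]

section Sextic

variable (α1 α2 α3 α4 β1 β2 β3 β4 c d : k)

/-- The homogenization of `y⁴ - 2(φ1 + φ2)y² + (d - cx)²`, which is `f` when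
`φ1 - φ2 = d - cx`. -/
noncomputable def sextic : MvPolynomial (Fin 3) k :=
  X 1 ^ 4 * X 2 ^ 2 - C 2 * (quarticForm α1 α2 α3 α4 + quarticForm β1 β2 β3 β4) * X 1 ^ 2 +
    (C d * X 2 - C c * X 0) ^ 2 * X 2 ^ 4

theorem isHomogeneous_sextic : (sextic α1 α2 α3 α4 β1 β2 β3 β4 c d).IsHomogeneous 6 := by
  have hL : (C d * X 2 - C c * X 0 : MvPolynomial (Fin 3) k).IsHomogeneous 1 :=
    (isHomogeneous_C_mul_X d 2).sub (isHomogeneous_C_mul_X c 0)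
  refine ((((isHomogeneous_X k 1).pow 4).mul ((isHomogeneous_X k 2).pow 2)).sub ?_).add
    ((hL.pow 2).mul ((isHomogeneous_X k 2).pow 4))
  simpa using ((isHomogeneous_C _ 2).mul ((isHomogeneous_quarticForm α1 α2 α3 α4).add
    (isHomogeneous_quarticForm β1 β2 β3 β4))).mul ((isHomogeneous_X k 1).pow 2)

variable {α1 α2 α3 α4 β1 β2 β3 β4 c d}

theorem eval_sextic (x y : k) :
    eval ![x, y, 1] (sextic α1 α2 α3 α4 β1 β2 β3 β4 c d) =
      y ^ 4 - 2 * ((quartic α1 α2 α3 α4).eval x + (quartic β1 β2 β3 β4).eval x) * y ^ 2 +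
        (d - c * x) ^ 2 := by
  simp [sextic, eval_quarticForm]

theorem eval_pderiv_zero_sextic (x y : k) :
    eval ![x, y, 1] (pderiv 0 (sextic α1 α2 α3 α4 β1 β2 β3 β4 c d)) =
      -2 * ((derivative (quartic α1 α2 α3 α4)).eval x +
        (derivative (quartic β1 β2 β3 β4)).eval x) * y ^ 2 - 2 * c * (d - c * x) := by
  simp only [sextic, map_add, map_sub, Derivation.leibniz, Derivation.leibniz_pow,
    Nat.add_one_sub_one, pow_one, pderiv_X, ne_eq, Fin.reduceEq, not_false_eq_true,
    Pi.single_eq_of_ne, smul_eq_mul, mul_zero, one_ne_zero, add_zero, derivation_C,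
    zero_add, zero_sub, Pi.single_eq_same, mul_one, mul_neg, smul_neg, nsmul_eq_mul,
    Nat.cast_ofNat, map_neg, map_mul, map_pow, eval_X, Matrix.cons_val_one, Matrix.cons_val_zero,
    eval_C, eval_pderiv_quarticForm, Matrix.cons_val, one_pow, eval_ofNat, one_mul, neg_mul]
  ring

theorem eval_pderiv_one_sextic (x y : k) :
    eval ![x, y, 1] (pderiv 1 (sextic α1 α2 α3 α4 β1 β2 β3 β4 c d)) =
      4 * y ^ 3 - 4 * ((quartic α1 α2 α3 α4).eval x + (quartic β1 β2 β3 β4).eval x) * y := by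
  simp only [sextic, map_add, map_sub, Derivation.leibniz, Derivation.leibniz_pow,
    Nat.add_one_sub_one, pow_one, pderiv_X, ne_eq, Fin.reduceEq, not_false_eq_true,
    Pi.single_eq_of_ne, smul_eq_mul, mul_zero, Pi.single_eq_same, mul_one,
    nsmul_eq_mul, Nat.cast_ofNat, zero_add, pderiv_one_quarticForm, add_zero, derivation_C,
    zero_ne_one, sub_self, map_mul, map_pow, eval_X, Matrix.cons_val, one_pow, eval_ofNat,
    Matrix.cons_val_one, Matrix.cons_val_zero, one_mul, eval_C, eval_quarticForm]
  ring

theorem eval_pderiv_two_sextic (x : k) :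
    eval ![x, 0, 1] (pderiv 2 (sextic α1 α2 α3 α4 β1 β2 β3 β4 c d)) =
      2 * d * (d - c * x) + 4 * (d - c * x) ^ 2 := by
  simp only [sextic, map_add, map_sub, Derivation.leibniz, Derivation.leibniz_pow,
    Nat.add_one_sub_one, pow_one, pderiv_X, Pi.single_eq_same, smul_eq_mul, mul_one, nsmul_eq_mul,
    Nat.cast_ofNat, ne_eq, Fin.reduceEq, not_false_eq_true, Pi.single_eq_of_ne, mul_zero,
    add_zero, derivation_C, zero_add, sub_zero, map_mul, map_pow, eval_X,
    Matrix.cons_val_one, Matrix.cons_val_zero, OfNat.ofNat_ne_zero, zero_pow, eval_ofNat,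
    Matrix.cons_val, zero_mul, eval_C, sub_self, one_pow, one_mul]
  ring

theorem eval_sextic_at_infinity (x y : k) :
    eval ![x, y, 0] (sextic α1 α2 α3 α4 β1 β2 β3 β4 c d) = -4 * x ^ 4 * y ^ 2 := by
  simp only [sextic, quarticForm, map_add, map_sub, map_mul, map_pow, eval_X, eval_C,
    Matrix.cons_val_zero, Matrix.cons_val_one, Matrix.cons_val_two, Matrix.tail_cons,
    Matrix.head_cons]
  ring

theorem eq_sextic_of_aeval_eq [Infinite k] {F : MvPolynomial (Fin 3) k}
    (hF : F.IsHomogeneous 6)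
    (hdiff : quartic α1 α2 α3 α4 - quartic β1 β2 β3 β4 = .C d - .C c * .X)
    (hFf : aeval ![(X 0 : MvPolynomial (Fin 2) k), X 1, 1] F =
      X 1 ^ 4 - C 2 * ((X 0 - C α1) * (X 0 - C α2) * (X 0 - C α3) * (X 0 - C α4) +
        (X 0 - C β1) * (X 0 - C β2) * (X 0 - C β3) * (X 0 - C β4)) * X 1 ^ 2 +
      ((X 0 - C α1) * (X 0 - C α2) * (X 0 - C α3) * (X 0 - C α4) -
        (X 0 - C β1) * (X 0 - C β2) * (X 0 - C β3) * (X 0 - C β4)) ^ 2) :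
    F = sextic α1 α2 α3 α4 β1 β2 β3 β4 c d := by
  refine hF.eq_of_eval_eq_of_apply_eq_one (isHomogeneous_sextic ..) 2 fun v hv => ?_
  have hv' : v = ![v 0, v 1, 1] := by ext i; fin_cases i <;> simp [hv]
  have hq (a1 a2 a3 a4 : k) :
      eval ![v 0, v 1] ((X 0 - C a1) * (X 0 - C a2) * (X 0 - C a3) * (X 0 - C a4)) =
        (quartic a1 a2 a3 a4).eval (v 0) := by
    simp [quartic]
  have hd : (quartic α1 α2 α3 α4).eval (v 0) - (quartic β1 β2 β3 β4).eval (v 0) =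
      d - c * v 0 := by
    simpa using congrArg (Polynomial.eval (v 0)) hdiff
  rw [hv', ← eval_aeval_dehomogenize, hFf, eval_sextic, ← hd]
  simp [hq]

theorem isSingularAt_sextic_axis_iff (hc : c ≠ 0) (ξ : k) :
    IsSingularAt (sextic α1 α2 α3 α4 β1 β2 β3 β4 c d) ![ξ, 0, 1] ↔ ξ = d / c := by
  rw [eq_div_iff hc]
  constructor
  · rintro ⟨h, -⟩
    rw [eval_sextic] at h
    have : d - c * ξ = 0 := pow_eq_zero_iff two_ne_zero |>.1 (by linear_combination h)
    linear_combination -this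
  · intro h
    refine ⟨?_, ?_, ?_, ?_⟩
    · rw [eval_sextic]; linear_combination (c * ξ - d) * h
    · rw [eval_pderiv_zero_sextic]; linear_combination 2 * c * h
    · rw [eval_pderiv_one_sextic]; ring
    · rw [eval_pderiv_two_sextic]; linear_combination (-(4 * (d - c * ξ) + 2 * d)) * h

theorem isSingularAt_sextic_zero_one_zero :
    IsSingularAt (sextic α1 α2 α3 α4 β1 β2 β3 β4 c d) ![0, 1, 0] := by
  simp [IsSingularAt, sextic, quarticForm]

theorem isSingularAt_sextic_one_zero_zero :
    IsSingularAt (sextic α1 α2 α3 α4 β1 β2 β3 β4 c d) ![1, 0, 0] := by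
  simp [IsSingularAt, sextic, quarticForm]

theorem not_isSingularAt_sextic (h4 : (4 : k) ≠ 0)
    (hdiff : quartic α1 α2 α3 α4 - quartic β1 β2 β3 β4 = .C d - .C c * .X)
    (hsep : (quartic α1 α2 α3 α4 * quartic β1 β2 β3 β4).Separable) {a b : k} (hb : b ≠ 0) :
    ¬ IsSingularAt (sextic α1 α2 α3 α4 β1 β2 β3 β4 c d) ![a, b, 1] := by
  rintro ⟨hf, hfx, hfy, -⟩
  rw [eval_sextic] at hf
  rw [eval_pderiv_zero_sextic] at hfx
  rw [eval_pderiv_one_sextic] at hfy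
  have hd : (quartic α1 α2 α3 α4 - quartic β1 β2 β3 β4).eval a = d - c * a := by simp [hdiff]
  have hd' : (derivative (quartic α1 α2 α3 α4 - quartic β1 β2 β3 β4)).eval a = -c := by
    simp [hdiff]
  obtain ⟨hroot, hroot'⟩ := eval_mul_eq_zero_and_eval_derivative_mul_eq_zero h4 hb
    (by rw [hd]; exact hf) (by rw [hd, hd']; linear_combination hfx) hfy
  exact hsep.eval₂_derivative_ne_zero (RingHom.id k) hroot hroot'

theorem mk_mem_of_isSingularAt_sextic (h4 : (4 : k) ≠ 0) (hc : c ≠ 0)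
    (hdiff : quartic α1 α2 α3 α4 - quartic β1 β2 β3 β4 = .C d - .C c * .X)
    (hsep : (quartic α1 α2 α3 α4 * quartic β1 β2 β3 β4).Separable) {w : Fin 3 → k} (hw : w ≠ 0)
    (hsing : IsSingularAt (sextic α1 α2 α3 α4 β1 β2 β3 β4 c d) w) :
    Projectivization.mk k w hw ∈ ({Projectivization.mk k ![d / c, 0, 1] (by simp),
      Projectivization.mk k ![0, 1, 0] (by simp), Projectivization.mk k ![1, 0, 0] (by simp)} :
        Set (Projectivization k (Fin 3 → k))) := by
  rcases eq_or_ne (w 2) 0 with hz | hz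
  · have h := hsing.1
    rw [show w = ![w 0, w 1, w 2] by ext i; fin_cases i <;> rfl, hz, eval_sextic_at_infinity] at h
    obtain hx | hy : w 0 = 0 ∨ w 1 = 0 := by simpa [h4] using h
    · refine Or.inr (Or.inl ((Projectivization.mk_eq_mk_iff' ..).2 ⟨w 1, ?_⟩))
      ext i; fin_cases i <;> simp [hx, hz]
    · refine Or.inr (Or.inr ((Projectivization.mk_eq_mk_iff' ..).2 ⟨w 0, ?_⟩))
      ext i; fin_cases i <;> simp [hy, hz]
  · have hw' : w = w 2 • ![w 0 / w 2, w 1 / w 2, 1] := by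
      ext i; fin_cases i <;> simp [mul_div_cancel₀ _ hz]
    rw [hw', (isHomogeneous_sextic ..).isSingularAt_smul_iff hz] at hsing
    have hy : w 1 / w 2 = 0 := by
      by_contra hy
      exact not_isSingularAt_sextic h4 hdiff hsep hy hsing
    rw [hy, isSingularAt_sextic_axis_iff hc] at hsing
    refine Or.inl ((Projectivization.mk_eq_mk_iff' ..).2 ⟨w 2, ?_⟩)
    rw [← hsing, ← hy, ← hw']

theorem setOf_isSingularAt_sextic (h4 : (4 : k) ≠ 0) (hc : c ≠ 0)
    (hdiff : quartic α1 α2 α3 α4 - quartic β1 β2 β3 β4 = .C d - .C c * .X)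
    (hsep : (quartic α1 α2 α3 α4 * quartic β1 β2 β3 β4).Separable) :
    {P : Projectivization k (Fin 3 → k) |
      IsSingularAt (sextic α1 α2 α3 α4 β1 β2 β3 β4 c d) P.rep} =
      {Projectivization.mk k ![d / c, 0, 1] (by simp), Projectivization.mk k ![0, 1, 0] (by simp),
        Projectivization.mk k ![1, 0, 0] (by simp)} := by
  have hG := isHomogeneous_sextic α1 α2 α3 α4 β1 β2 β3 β4 c d
  ext P
  induction P using Projectivization.ind with | h w hw => ?_
  rw [Set.mem_ofPred_eq, hG.isSingularAt_mk_rep_iff]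
  refine ⟨mk_mem_of_isSingularAt_sextic h4 hc hdiff hsep hw, ?_⟩
  rintro (h | h | h) <;> rw [← hG.isSingularAt_mk_rep_iff hw, h, hG.isSingularAt_mk_rep_iff]
  exacts [(isSingularAt_sextic_axis_iff hc _).2 rfl, isSingularAt_sextic_zero_one_zero,
    isSingularAt_sextic_one_zero_zero]

end Sextic

theorem ncard_three_points (a : k) :
    ({Projectivization.mk k ![a, 0, 1] (by simp), Projectivization.mk k ![0, 1, 0] (by simp),
      Projectivization.mk k ![1, 0, 0] (by simp)} : Set (Projectivization k (Fin 3 → k))).ncard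
        = 3 := by
  refine Set.ncard_eq_three.2 ⟨_, _, _, fun h => ?_, fun h => ?_, fun h => ?_, rfl⟩
  · simpa using Projectivization.apply_eq_zero_of_mk_eq_mk _ _ h (i := 2) rfl
  · simpa using Projectivization.apply_eq_zero_of_mk_eq_mk _ _ h (i := 2) rfl
  · simpa using Projectivization.apply_eq_zero_of_mk_eq_mk _ _ h (i := 1) rfl

end

/-- Case (II-3): if σ1 = τ1, σ2 = τ2 and σ3 ≠ τ3, then F = 0 has a unique
singular point of the form (x:0:1), namely (ξ:0:1) with ξ = (σ4-τ4)/(σ3-τ3),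
and Sing = {(ξ:0:1), (0:1:0), (1:0:0)} has exactly 3 elements. -/
theorem stmt_17
    {k : Type*} [Field k] [IsAlgClosed k]
    (p : ℕ) [CharP k p] (hp : p = 0 ∨ 5 ≤ p)
    (α1 α2 α3 α4 β1 β2 β3 β4 : k)
    (hdist : ([α1, α2, α3, α4, β1, β2, β3, β4] : List k).Pairwise (· ≠ ·))
    (σ1 σ2 σ3 σ4 τ1 τ2 τ3 τ4 : k)
    (hσ1 : σ1 = α1 + α2 + α3 + α4)
    (hσ2 : σ2 = α1 * α2 + α1 * α3 + α1 * α4 + α2 * α3 + α2 * α4 + α3 * α4)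
    (hσ3 : σ3 = α1 * α2 * α3 + α1 * α2 * α4 + α1 * α3 * α4 + α2 * α3 * α4)
    (hσ4 : σ4 = α1 * α2 * α3 * α4)
    (hτ1 : τ1 = β1 + β2 + β3 + β4)
    (hτ2 : τ2 = β1 * β2 + β1 * β3 + β1 * β4 + β2 * β3 + β2 * β4 + β3 * β4)
    (hτ3 : τ3 = β1 * β2 * β3 + β1 * β2 * β4 + β1 * β3 * β4 + β2 * β3 * β4)
    (hτ4 : τ4 = β1 * β2 * β3 * β4)
    (φ1 φ2 f : MvPolynomial (Fin 2) k)
    (hφ1 : φ1 = (X 0 - C α1) * (X 0 - C α2) * (X 0 - C α3) * (X 0 - C α4))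
    (hφ2 : φ2 = (X 0 - C β1) * (X 0 - C β2) * (X 0 - C β3) * (X 0 - C β4))
    (hf : f = X 1 ^ 4 - C 2 * (φ1 + φ2) * X 1 ^ 2 + (φ1 - φ2) ^ 2)
    (F : MvPolynomial (Fin 3) k)
    (hFhom : F.IsHomogeneous 6)
    (hFf : aeval ![(X 0 : MvPolynomial (Fin 2) k), X 1, 1] F = f)
    (Sing : Set (Projectivization k (Fin 3 → k)))
    (hSing : ∀ P : Projectivization k (Fin 3 → k),
      P ∈ Sing ↔ (eval P.rep F = 0 ∧
        eval P.rep (pderiv 0 F) = 0 ∧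
        eval P.rep (pderiv 1 F) = 0 ∧
        eval P.rep (pderiv 2 F) = 0))
    (hστ1 : σ1 = τ1) (hστ2 : σ2 = τ2) (hστ3 : σ3 ≠ τ3) :
    (∀ ξ : k, Projectivization.mk k (![ξ, 0, 1] : Fin 3 → k)
        (by intro hc; simpa using congrFun hc 2) ∈ Sing
      ↔ ξ = (σ4 - τ4) / (σ3 - τ3))
    ∧ Sing = {Projectivization.mk k
                (![(σ4 - τ4) / (σ3 - τ3), 0, 1] : Fin 3 → k)
                (by intro hc; simpa using congrFun hc 2),
              Projectivization.mk k (![0, 1, 0] : Fin 3 → k)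
                (by intro hc; simpa using congrFun hc 1),
              Projectivization.mk k (![1, 0, 0] : Fin 3 → k)
                (by intro hc; simpa using congrFun hc 0)}
    ∧ Sing.ncard = 3 := by
  subst hσ1 hσ2 hσ3 hσ4 hτ1 hτ2 hτ3 hτ4 hφ1 hφ2 hf
  have h4 : (4 : k) ≠ 0 := four_ne_zero_of_charP p hp
  have hc := sub_ne_zero.2 hστ3
  have hdiff := quartic_sub_quartic hστ1 hστ2
  have hSing_eq : Sing = {P | IsSingularAt F P.rep} := Set.ext hSing
  obtain rfl := eq_sextic_of_aeval_eq hFhom hdiff hFf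
  rw [setOf_isSingularAt_sextic h4 hc hdiff (separable_quartic_mul_quartic hdist)] at hSing_eq
  refine ⟨fun ξ => ?_, hSing_eq, hSing_eq ▸ ncard_three_points _⟩
  rw [hSing, ← IsSingularAt, hFhom.isSingularAt_mk_rep_iff, isSingularAt_sextic_axis_iff hc]
end
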